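/- A prime play u of a Zielonka automaton is a Q-broadcast (for Q ⊆ P) if and only if for every trace v such that uv is a play and v is prime, at least one of the following holds: uv is prime, or v I Q, or dom(v) ⊆ Q. -/

import Mathlib

namespace MazTrace

variable {A : Type*}

/-- Smallest equivalence on words over `A` generated by commuting two adjacent
independent letters (`a I b` iff `¬ D a b`). -/
inductive TraceRel (D : A → A → Prop) : List A → List A → Prop
  | refl (u : List A) : TraceRel D u u
  | swap (u v : List A) (a b : A) (h : ¬ D a b) :
      TraceRel D (u ++ a :: b :: v) (u ++ b :: a :: v)
  | symm {u v : List A} : TraceRel D u v → TraceRel D v u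
  | trans {u v w : List A} : TraceRel D u v → TraceRel D v w → TraceRel D u w

theorem TraceRel.append_right {D : A → A → Prop} {u u' : List A} (w : List A)
    (h : TraceRel D u u') : TraceRel D (u ++ w) (u' ++ w) := by
  induction h with
  | refl u => exact .refl _
  | swap x y a b hab =>
      simpa [List.append_assoc] using TraceRel.swap (D := D) x (y ++ w) a b hab
  | symm _ ih => exact ih.symm
  | trans _ _ ih1 ih2 => exact ih1.trans ih2

theorem TraceRel.append_left {D : A → A → Prop} {v v' : List A} (w : List A)
    (h : TraceRel D v v') : TraceRel D (w ++ v) (w ++ v') := by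
  induction h with
  | refl u => exact .refl _
  | swap x y a b hab =>
      simpa [List.append_assoc] using TraceRel.swap (D := D) (w ++ x) y a b hab
  | symm _ ih => exact ih.symm
  | trans _ _ ih1 ih2 => exact ih1.trans ih2

def traceSetoid (D : A → A → Prop) : Setoid (List A) :=
  ⟨TraceRel D, ⟨TraceRel.refl, TraceRel.symm, TraceRel.trans⟩⟩

/-- A Mazurkiewicz trace: an equivalence class of words. -/
def Trace (D : A → A → Prop) : Type _ := Quotient (traceSetoid D)

namespace Trace

variable {D : A → A → Prop}

/-- The trace of a word. -/
def mk (D : A → A → Prop) (u : List A) : Trace D := Quotient.mk (traceSetoid D) u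

/-- The empty trace. -/
instance : One (Trace D) := ⟨mk D []⟩

/-- Concatenation of traces, induced by concatenation of words. -/
instance : Mul (Trace D) :=
  ⟨fun s t => Quotient.liftOn₂ s t (fun u v => mk D (u ++ v))
    (fun _ _ _ _ hu hv =>
      Quotient.sound ((hu.append_right _).trans (TraceRel.append_left _ hv)))⟩

instance : Nonempty (Trace D) := ⟨1⟩

/-- Length of a trace: the length of any of its linearizations. -/
def length (t : Trace D) : ℕ :=
  Quotient.liftOn t List.length (by
    intro u v h
    induction h with
    | refl u => rfl
    | swap x y a b hab => simp
    | symm _ ih => exact ih.symm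
    | trans _ _ ih1 ih2 => exact ih1.trans ih2)

/-- The set of letters of a trace. -/
def alph (t : Trace D) : Set A :=
  Quotient.liftOn t (fun u => {a | a ∈ u}) (by
    intro u v h
    induction h with
    | refl u => rfl
    | swap x y a b hab => ext c; simp [List.mem_append]; tauto
    | symm _ ih => exact ih.symm
    | trans _ _ ih1 ih2 => exact ih1.trans ih2)

/-- Prefix order on traces: `s ⊑ t` iff `s * w = t` for some trace `w`. -/
def Prefix (s t : Trace D) : Prop := ∃ w, s * w = t

/-- `t I B` : every letter of the trace `t` is independent of every element of `B`. -/
def IndepSet (t : Trace D) (B : Set A) : Prop := ∀ a ∈ t.alph, ∀ b ∈ B, ¬ D a b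

/-- `w` is the `B`-view of `t`: the shortest prefix of `t` such that `t = w·v`
for some trace `v` with `v I B`. -/
def IsView (B : Set A) (t w : Trace D) : Prop :=
  (∃ v, w * v = t ∧ v.IndepSet B) ∧
  ∀ w' v', w' * v' = t → v'.IndepSet B → w.length ≤ w'.length

/-- The `B`-view of a trace. -/
noncomputable def view (B : Set A) (t : Trace D) : Trace D :=
  Classical.epsilon (IsView B t)

/-- A trace is prime if all its linearizations have the same last letter. -/
def IsPrime (t : Trace D) : Prop :=
  ∃ a : A, ∀ u : List A, mk D u = t → u.getLast? = some a

/-- A trace is `b`-prime if every linearization of it ends with the letter `b`. -/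
def LastIs (b : A) (t : Trace D) : Prop :=
  ∀ u : List A, mk D u = t → u.getLast? = some b

end Trace

/-- A Zielonka automaton over the actions `A` and the processes `P`:
each process `p` has a finite state set `St p` with an initial state, final states
and a set `acts p` of actions (`A` is covered by the `acts p`); transitions form a
deterministic set of tuples `(a, (q_p)_{p ∈ dom a}, (q'_p)_{p ∈ dom a})`,
modelled as a partial function `δ`. -/
structure ZAut (A : Type*) (P : Type*) where
  St : P → Type*
  stFinite : ∀ p, Finite (St p)
  init : ∀ p, St p
  final : ∀ p, Set (St p)
  acts : P → Set A
  covers : ∀ a : A, ∃ p, a ∈ acts p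
  δ : ∀ a : A, (∀ p : {p : P // a ∈ acts p}, St p.1) →
      Option (∀ p : {p : P // a ∈ acts p}, St p.1)

namespace ZAut

open scoped Classical

variable {A P : Type*} (M : ZAut A P)

/-- The domain of an action: the processes taking part in it. -/
def dom (a : A) : Set P := {p | a ∈ M.acts p}

/-- Two actions are dependent iff their domains intersect. -/
def Dep (a b : A) : Prop := ∃ p : P, p ∈ M.dom a ∧ p ∈ M.dom b

/-- The domain of a trace: the union of the domains of its letters. -/
def tdom (t : Trace M.Dep) : Set P := {p | ∃ a ∈ t.alph, p ∈ M.dom a}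

/-- One step of the automaton on a global state. -/
noncomputable def step (q : ∀ p, M.St p) (a : A) : Option (∀ p, M.St p) :=
  (M.δ a (fun p => q p.1)).map
    (fun q' p => if h : a ∈ M.acts p then q' ⟨p, h⟩ else q p)

/-- The run of the automaton on a word, from the initial global state. -/
noncomputable def runWord (u : List A) : Option (∀ p, M.St p) :=
  u.foldl (fun oq a => oq.bind (fun q => M.step q a)) (some fun p => M.init p)

/-- The global state `Q(t)` reached after a trace `t` (all linearizations give
the same run). -/
noncomputable def run (t : Trace M.Dep) : Option (∀ p, M.St p) :=
  Classical.epsilon (fun o => ∀ u : List A, Trace.mk M.Dep u = t → M.runWord u = o)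

/-- A trace is a play if the automaton can execute it from the initial state. -/
def IsPlay (t : Trace M.Dep) : Prop :=
  ∀ u : List A, Trace.mk M.Dep u = t → (M.runWord u).isSome = true

/-- `a` is a maximal action of `t` : `t = t'·a` for some trace `t'`. -/
def MaxAct (t : Trace M.Dep) (a : A) : Prop :=
  ∃ t', t = t' * Trace.mk M.Dep [a]

/-- `v I Q` : the domain of every letter of `v` is disjoint from `Q`. -/
def IndepProcs (v : Trace M.Dep) (Q : Set P) : Prop :=
  ∀ b ∈ v.alph, M.dom b ∩ Q = ∅

/-- A `Q`-broadcast: a prime play `u` such that for every play `uv` and every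
action `a` maximal in `uv` whose domain meets both `Q` and `P ∖ Q`,
`u ⊑ view_a(uv)`. -/
def Broadcast (Q : Set P) (u : Trace M.Dep) : Prop :=
  u.IsPrime ∧ M.IsPlay u ∧
  ∀ (v : Trace M.Dep) (a : A), M.IsPlay (u * v) → M.MaxAct (u * v) a →
    (M.dom a ∩ Q).Nonempty → (M.dom a ∩ Qᶜ).Nonempty →
    u.Prefix (Trace.view {a} (u * v))

end ZAut

end MazTrace

/-!
If `uv` is not prime although `v` is, `uv` has a maximal action `f` that is maximal in `u`
and independent of `v`. The letters of the prime trace `v` are connected under dependence, so `v`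
contains an action `a` whose domain meets both `Q` and `P ∖ Q`. The broadcast property, applied
to a prefix of `v` ending with `a`, makes `u·x` an `a`-prime trace for some `x` independent
of `f`; hence `f = a`, contradicting `a ∈ v`.

Conversely, write `uv = view_a(uv)·z` and apply Levi's lemma: `u = pq`, `v = rs` and
`view_a(uv) = pr`, with `q` independent of `r` and of `a`. Then `r` is empty or `a`-prime and
`ur = view_a(uv)·q`, so the hypothesis applied to `r` makes `view_a(uv)·q` prime, which forces
`q = 1`, i.e. `u = p ⊑ view_a(uv)`.
-/

namespace MazTrace
namespace Trace

variable {A : Type*} {D : A → A → Prop}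

@[elab_as_elim]
theorem ind {p : Trace D → Prop} (h : ∀ l, p (mk D l)) (t : Trace D) : p t := Quotient.ind h t

theorem mk_append (u v : List A) : mk D (u ++ v) = mk D u * mk D v := rfl

theorem mk_cons (a : A) (l : List A) : mk D (a :: l) = mk D [a] * mk D l := rfl

theorem mk_nil : mk D [] = (1 : Trace D) := rfl

instance : Monoid (Trace D) where
  mul_assoc s t r := by
    induction s using ind; induction t using ind; induction r using ind
    simp only [← mk_append, List.append_assoc]
  one_mul t := by induction t using ind; rfl
  mul_one t := by induction t using ind; simp only [← mk_nil, ← mk_append, List.append_nil]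

theorem length_mk (l : List A) : (mk D l).length = l.length := rfl

theorem length_mul (s t : Trace D) : (s * t).length = s.length + t.length := by
  induction s using ind; induction t using ind
  exact List.length_append ..

theorem mem_alph_mk {a : A} {l : List A} : a ∈ (mk D l).alph ↔ a ∈ l := Iff.rfl

@[simp]
theorem alph_mul (s t : Trace D) : (s * t).alph = s.alph ∪ t.alph := by
  induction s using ind; induction t using ind
  ext; exact List.mem_append

@[simp]
theorem alph_one : (1 : Trace D).alph = ∅ := by
  ext; exact List.mem_nil_iff _

@[simp]
theorem alph_mk_singleton (a : A) : (mk D [a]).alph = {a} := by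
  ext; exact List.mem_singleton

theorem ne_one_of_mem_alph {t : Trace D} {a : A} (h : a ∈ t.alph) : t ≠ 1 := by
  rintro rfl
  simp at h

theorem exists_eq_mul_single_of_ne_one {t : Trace D} (h : t ≠ 1) :
    ∃ s e, t = s * mk D [e] := by
  induction t using ind with | _ l
  obtain ⟨l', e, rfl⟩ := (List.eq_nil_or_concat' l).resolve_left (by rintro rfl; exact h rfl)
  exact ⟨mk D l', e, rfl⟩

theorem mk_single_mul_comm {a b : A} (h : ¬ D a b) :
    mk D [a] * mk D [b] = mk D [b] * mk D [a] :=
  Quotient.sound (TraceRel.swap [] [] a b h)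

theorem indepSet_singleton {t : Trace D} {a : A} :
    t.IndepSet {a} ↔ ∀ c ∈ t.alph, ¬ D c a := by
  simp [IndepSet]

theorem IndepSet.mono {s t : Trace D} {B : Set A} (ht : t.IndepSet B) (hst : s.alph ⊆ t.alph) :
    s.IndepSet B :=
  fun c hc => ht c (hst hc)

theorem mul_single_comm {t : Trace D} {x : A} (h : t.IndepSet {x}) :
    t * mk D [x] = mk D [x] * t := by
  induction t using ind with | _ l
  induction l with
  | nil => rfl
  | cons y l ih =>
    have hl : (mk D l).IndepSet {x} := h.mono fun c hc => List.mem_cons_of_mem y hc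
    rw [mk_cons, mul_assoc, ih hl, ← mul_assoc, mk_single_mul_comm (h y (.head l) x rfl),
      mul_assoc]

theorem mul_comm_of_indepSet {s t : Trace D} (h : s.IndepSet t.alph) : s * t = t * s := by
  induction t using ind with | _ l
  induction l with
  | nil => rw [mk_nil, mul_one, one_mul]
  | cons y l ih =>
    have hy : s.IndepSet {y} := indepSet_singleton.2 fun c hc => h c hc y (.head l)
    rw [mk_cons, ← mul_assoc, mul_single_comm hy, mul_assoc, ih fun c hc d hd =>
      h c hc d (List.mem_cons_of_mem y hd), mul_assoc]

theorem mk_eq_mk_filter_mul (p : A → Prop) [DecidablePred p] (l : List A)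
    (h : ∀ x ∈ l, ∀ y ∈ l, p x → ¬ p y → ¬ D x y) :
    mk D l = mk D (l.filter p) * mk D (l.filter (¬ p ·)) := by
  induction l with
  | nil => rfl
  | cons x l ih =>
    rw [mk_cons, ih fun y hy z hz => h y (.tail x hy) z (.tail x hz)]
    by_cases hx : p x
    · rw [List.filter_cons_of_pos (by simpa), List.filter_cons_of_neg (by simpa)]
      exact (mul_assoc ..).symm
    · have hxl : (mk D (l.filter p)).IndepSet {x} := indepSet_singleton.2 fun y hy => by
        rw [mem_alph_mk, List.mem_filter, decide_eq_true_iff] at hy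
        exact h y (.tail x hy.1) x (.head l) hy.2 hx
      rw [List.filter_cons_of_neg (by simpa), List.filter_cons_of_pos (by simpa),
        mk_cons x (l.filter (¬ p ·)), ← mul_assoc, ← mul_single_comm hxl, mul_assoc]

section LastIs

variable {a b : A} {t : Trace D}

theorem lastIs_iff : LastIs b t ↔ t ≠ 1 ∧ ∀ s e, t = s * mk D [e] → e = b := by
  refine ⟨fun h => ⟨fun ht => by simpa using h [] ht.symm, fun s e hse => ?_⟩,
    fun ⟨hne, h⟩ l hl => ?_⟩
  · induction s using ind with | _ ls
    simpa using h (ls ++ [e]) hse.symm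
  · obtain ⟨l', e, rfl⟩ :=
      (List.eq_nil_or_concat' l).resolve_left (by rintro rfl; exact hne hl.symm)
    simpa using h (mk D l') e hl.symm

theorem LastIs.ne_one (h : LastIs b t) : t ≠ 1 := (lastIs_iff.1 h).1

theorem LastIs.eq_of_eq_mul (h : LastIs b t) {s : Trace D} {e : A} (hse : t = s * mk D [e]) :
    e = b :=
  (lastIs_iff.1 h).2 s e hse

theorem LastIs.exists_eq_mul (h : LastIs b t) : ∃ s, t = s * mk D [b] := by
  obtain ⟨s, e, hse⟩ := exists_eq_mul_single_of_ne_one h.ne_one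
  exact ⟨s, h.eq_of_eq_mul hse ▸ hse⟩

theorem LastIs.mem_alph (h : LastIs b t) : b ∈ t.alph := by
  obtain ⟨s, rfl⟩ := h.exists_eq_mul
  simp

theorem LastIs.of_mul {p : Trace D} (h : LastIs a (p * t)) (ht : t ≠ 1) : LastIs a t :=
  lastIs_iff.2 ⟨ht, fun s e hse => h.eq_of_eq_mul (s := p * s) (by rw [hse, mul_assoc])⟩

variable [Std.Refl D]

theorem LastIs.eq_one_of_indepSet {p : Trace D} (h : LastIs a (p * t)) (ht : t.IndepSet {a}) :
    t = 1 := by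
  by_contra hne
  obtain ⟨s, e, rfl⟩ := exists_eq_mul_single_of_ne_one hne
  have hea : e = a := h.eq_of_eq_mul (s := p * s) (mul_assoc ..).symm
  subst hea
  exact ht e (by simp) e rfl (refl e)

theorem LastIs.eq_one_of_isPrime_mul {w : Trace D} (hw : LastIs a w) (ht : t.IndepSet {a})
    (hwt : (w * t).IsPrime) : t = 1 := by
  obtain ⟨c, hc : LastIs c (w * t)⟩ := hwt
  obtain ⟨w', rfl⟩ := hw.exists_eq_mul
  obtain rfl : a = c := hc.eq_of_eq_mul (s := w' * t) <| by
    rw [mul_assoc, mul_assoc, mul_single_comm ht]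
  exact hc.eq_one_of_indepSet ht

theorem not_isPrime_mul {s : Trace D} (hs : s ≠ 1) (ht : t ≠ 1) (hst : s.IndepSet t.alph) :
    ¬ (s * t).IsPrime := by
  rintro ⟨c, hc : LastIs c (s * t)⟩
  obtain ⟨s', e, rfl⟩ := exists_eq_mul_single_of_ne_one hs
  obtain ⟨t', f, rfl⟩ := exists_eq_mul_single_of_ne_one ht
  have hf : f = c := hc.eq_of_eq_mul (mul_assoc ..).symm
  have he : e = c := hc.eq_of_eq_mul (s := t' * mk D [f] * s') <| by
    rw [mul_comm_of_indepSet hst]; simp only [mul_assoc]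
  exact hst e (by simp) f (by simp) (he.trans hf.symm ▸ refl e)

theorem IsPrime.forall_or_forall {t : Trace D} (ht : t.IsPrime) (p : A → Prop)
    (h : ∀ x ∈ t.alph, ∀ y ∈ t.alph, p x → ¬ p y → ¬ D x y) :
    (∀ x ∈ t.alph, p x) ∨ ∀ x ∈ t.alph, ¬ p x := by
  classical
  induction t using ind with | _ l
  rw [mk_eq_mk_filter_mul p l h] at ht
  by_contra! ⟨⟨x, hxl, hx⟩, ⟨y, hyl, hy⟩⟩
  refine not_isPrime_mul (ne_one_of_mem_alph (a := y) ?_) (ne_one_of_mem_alph (a := x) ?_) ?_ ht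
  · exact List.mem_filter.2 ⟨hyl, by simpa⟩
  · exact List.mem_filter.2 ⟨hxl, by simpa⟩
  · intro c hc d hd
    rw [mem_alph_mk, List.mem_filter, decide_eq_true_iff] at hc hd
    exact h c hc.1 d hd.1 hc.2 hd.2

end LastIs

theorem exists_isView (B : Set A) (t : Trace D) : ∃ w, IsView B t w := by
  classical
  have hex : ∃ n, ∃ w z : Trace D, w * z = t ∧ z.IndepSet B ∧ w.length = n :=
    ⟨t.length, t, 1, mul_one t, by simp [IndepSet], rfl⟩
  obtain ⟨w, z, hwz, hzI, hlen⟩ := Nat.find_spec hex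
  exact ⟨w, ⟨z, hwz, hzI⟩, fun w' v' hw' hv' =>
    hlen ▸ Nat.find_min' hex ⟨w', v', hw', hv', rfl⟩⟩

theorem isView_view (B : Set A) (t : Trace D) : IsView B t (view B t) :=
  Classical.epsilon_spec (exists_isView B t)

variable [Std.Refl D] [Std.Symm D]

open scoped Classical in
/-- The word of occurrences of `a` and `b`: it does not depend on the linearization because
`a` and `b` never commute. -/
noncomputable def proj {a b : A} (hab : D a b) (t : Trace D) : List A :=
  Quotient.liftOn t (List.filter fun x => x = a ∨ x = b) fun u v h => by
    induction h with
    | refl => rfl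
    | symm _ ih => exact ih.symm
    | trans _ _ ih₁ ih₂ => exact ih₁.trans ih₂
    | swap x y c d hcd =>
      have : ¬ ((c = a ∨ c = b) ∧ (d = a ∨ d = b)) := by
        rintro ⟨rfl | rfl, rfl | rfl⟩
        exacts [hcd (refl _), hcd hab, hcd (symm hab), hcd (refl _)]
      by_cases hc : c = a ∨ c = b <;> by_cases hd : d = a ∨ d = b <;>
        simp_all [List.filter_append]

variable {a b : A} (hab : D a b)

theorem proj_mul (s t : Trace D) : proj hab (s * t) = proj hab s ++ proj hab t := by
  induction s using ind; induction t using ind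
  exact List.filter_append ..

theorem proj_one : proj hab (1 : Trace D) = [] := rfl

theorem proj_single_of_mem {x : A} (hx : x = a ∨ x = b) : proj hab (mk D [x]) = [x] := by
  simp [proj, mk, hx]

theorem proj_single_of_not_mem {x : A} (hx : ¬ (x = a ∨ x = b)) : proj hab (mk D [x]) = [] := by
  simp [proj, mk, hx]

variable {hab}

theorem exists_eq_mul_single_of_proj {x : A} {t : Trace D}
    (h : ∀ b (hxb : D x b), ∃ l, proj hxb t = l ++ [x]) : ∃ s, t = s * mk D [x] := by
  induction t using ind with | _ l
  induction l using List.reverseRecOn with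
  | nil => simpa [mk_nil, proj_one] using h x (refl x)
  | append_singleton l y ih =>
    by_cases hyx : y = x
    · exact ⟨mk D l, by rw [hyx, mk_append]⟩
    have hxy : ¬ D x y := fun hxy => hyx <| by
      simpa [mk_append, proj_mul, proj_single_of_mem hxy (Or.inr rfl)] using h y hxy
    obtain ⟨s, hs⟩ := ih fun b hxb => by
      have hy : ¬ (y = x ∨ y = b) := by rintro (rfl | rfl) <;> contradiction
      simpa [mk_append, proj_mul, proj_single_of_not_mem hxb hy] using h b hxb
    refine ⟨s * mk D [y], ?_⟩
    rw [mk_append, hs, mul_assoc, mk_single_mul_comm hxy, mul_assoc]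

theorem ext_proj {s t : Trace D} (h : ∀ a b (hab : D a b), proj hab s = proj hab t) : s = t := by
  induction s using ind with | _ l
  induction l using List.reverseRecOn generalizing t with
  | nil =>
    by_contra hne
    obtain ⟨t', e, rfl⟩ := exists_eq_mul_single_of_ne_one (Ne.symm hne)
    simpa [mk_nil, proj_one, proj_mul, proj_single_of_mem (refl e) (Or.inl rfl)]
      using h e e (refl e)
  | append_singleton l x ih =>
    obtain ⟨t', rfl⟩ := exists_eq_mul_single_of_proj (t := t) fun b hxb =>
      ⟨proj hxb (mk D l), by
        rw [← h, mk_append, proj_mul, proj_single_of_mem hxb (Or.inl rfl)]⟩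
    rw [mk_append, ih fun a b hab => ?_]
    have := h a b hab
    rw [mk_append, proj_mul, proj_mul] at this
    exact List.append_cancel_right this

instance : IsCancelMul (Trace D) where
  mul_left_cancel s t t' h := ext_proj fun a b hab => by
    simpa [proj_mul] using congrArg (proj hab) h
  mul_right_cancel s t t' h := ext_proj fun a b hab => by
    simpa [proj_mul] using congrArg (proj hab) h

theorem mul_single_eq_mul_single_cases {p q : Trace D} {c e : A} (h : p * mk D [c] = q * mk D [e]) :
    c = e ∨ ¬ D c e ∧ ∃ r, p = r * mk D [e] ∧ q = r * mk D [c] := by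
  by_cases hce : c = e
  · exact .inl hce
  have hproj : ∀ {a b} (hab : D a b), proj hab p ++ proj hab (mk D [c]) =
      proj hab q ++ proj hab (mk D [e]) := fun hab => by
    rw [← proj_mul, ← proj_mul, h]
  have hDce : ¬ D c e := fun hDce => hce <| by
    have := hproj hDce
    rw [proj_single_of_mem hDce (.inl rfl), proj_single_of_mem hDce (.inr rfl)] at this
    exact List.singleton_inj.mp (List.append_inj' this rfl).2
  obtain ⟨r, rfl⟩ := exists_eq_mul_single_of_proj (t := p) fun b heb => ⟨proj heb q, by
    have hc : ¬ (c = e ∨ c = b) := by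
      rintro (rfl | rfl)
      exacts [hce rfl, hDce (symm heb)]
    simpa [proj_single_of_mem heb, proj_single_of_not_mem heb hc] using hproj heb⟩
  refine .inr ⟨hDce, r, rfl, mul_right_cancel (b := mk D [e]) ?_⟩
  rw [← h, mul_assoc, mul_assoc, mk_single_mul_comm hDce]

theorem mul_eq_mul_single_cases {u v s : Trace D} {f : A} (h : u * v = s * mk D [f]) :
    (∃ v', v = v' * mk D [f]) ∨ (∃ u', u = u' * mk D [f]) ∧ v.IndepSet {f} := by
  induction v using ind with | _ l
  induction l using List.reverseRecOn generalizing s with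
  | nil =>
    rw [mk_nil, mul_one] at h
    exact .inr ⟨⟨s, h⟩, by simp [IndepSet, mk_nil]⟩
  | append_singleton l e ih =>
    rw [mk_append, ← mul_assoc] at h
    rcases mul_single_eq_mul_single_cases h with rfl | ⟨hef, r, hr, rfl⟩
    · exact .inl ⟨mk D l, rfl⟩
    rcases ih hr with ⟨v', hv'⟩ | ⟨hu, hl⟩
    · refine .inl ⟨v' * mk D [e], ?_⟩
      rw [mk_append, hv', mul_assoc, mk_single_mul_comm fun h => hef (symm h), mul_assoc]
    · refine .inr ⟨hu, ?_⟩
      simp_all [IndepSet, mk_append]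

theorem levi {u v w z : Trace D} (h : u * v = w * z) :
    ∃ p q r s, u = p * q ∧ v = r * s ∧ w = p * r ∧ z = q * s ∧ q.IndepSet r.alph := by
  induction z using ind with | _ l
  induction l using List.reverseRecOn generalizing u v with
  | nil => exact ⟨u, 1, v, 1, by simp_all [mk_nil, IndepSet]⟩
  | append_singleton l e ih =>
    rw [mk_append, ← mul_assoc] at h
    rcases mul_eq_mul_single_cases h with ⟨v', rfl⟩ | ⟨⟨u', rfl⟩, hve⟩
    · rw [← mul_assoc] at h
      obtain ⟨p, q, r, s, rfl, rfl, rfl, hl, hqr⟩ := ih (mul_right_cancel h)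
      exact ⟨p, q, r, s * mk D [e], rfl, by rw [mul_assoc], rfl, by rw [mk_append, hl, mul_assoc],
        hqr⟩
    · rw [mul_assoc, ← mul_single_comm hve, ← mul_assoc] at h
      obtain ⟨p, q, r, s, rfl, rfl, rfl, hl, hqr⟩ := ih (mul_right_cancel h)
      refine ⟨p, q * mk D [e], r, s, by rw [mul_assoc], rfl, rfl, ?_, ?_⟩
      · rw [mk_append, hl, mul_assoc, mul_assoc,
          mul_single_comm (hve.mono (by simp))]
      · simp only [IndepSet, alph_mul, alph_mk_singleton] at hve hqr ⊢
        rintro c (hc | rfl) d hd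
        exacts [hqr c hc d hd, fun hcd => hve d (.inl hd) c rfl (symm hcd)]

theorem IsView.lastIs {t t' w : Trace D} {a : A} (hw : IsView {a} t w) (ht : t = t' * mk D [a]) :
    LastIs a w := by
  subst ht
  obtain ⟨⟨z, hz, hzI⟩, hmin⟩ := hw
  have ha : a ∉ z.alph := fun ha => hzI a ha a rfl (refl a)
  rcases mul_eq_mul_single_cases hz with ⟨z', rfl⟩ | ⟨⟨w', rfl⟩, -⟩
  · exact absurd (by simp) ha
  refine lastIs_iff.2 ⟨ne_one_of_mem_alph (a := a) (by simp), fun s e hse => ?_⟩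
  rcases mul_single_eq_mul_single_cases hse.symm with hea | ⟨hea, -⟩
  · exact hea
  have hez : (mk D [e] * z).IndepSet {a} := by
    simp only [IndepSet, alph_mul, alph_mk_singleton] at hzI ⊢
    rintro c (rfl | hc) b rfl
    exacts [hea, hzI c hc b rfl]
  have := hmin s (mk D [e] * z) (by rw [← mul_assoc, ← hse, hz]) hez
  simp [hse, length_mul, length_mk] at this

theorem exists_prefix_lastIs {t : Trace D} {a : A} (ha : a ∈ t.alph) :
    ∃ s, s.Prefix t ∧ LastIs a s := by
  induction t using ind with | _ l
  obtain ⟨l₁, l₂, rfl⟩ := List.append_of_mem (mem_alph_mk.1 ha)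
  obtain ⟨⟨z, hz, -⟩, -⟩ := isView_view {a} (mk D l₁ * mk D [a])
  refine ⟨_, ⟨z * mk D l₂, ?_⟩, (isView_view {a} (mk D l₁ * mk D [a])).lastIs rfl⟩
  rw [← mul_assoc, hz, ← mk_append, ← mk_append, List.append_assoc, List.singleton_append]

end Trace

namespace ZAut

variable {A P : Type*} {M : ZAut A P}

instance : Std.Refl M.Dep := ⟨fun a => let ⟨p, hp⟩ := M.covers a; ⟨p, hp, hp⟩⟩

instance : Std.Symm M.Dep := ⟨fun _ _ ⟨p, ha, hb⟩ => ⟨p, hb, ha⟩⟩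

theorem IsPlay.of_mul {s t : Trace M.Dep} (h : M.IsPlay (s * t)) : M.IsPlay s := by
  intro l hl
  induction t using Trace.ind with | _ m
  have hm := h (l ++ m) (by rw [Trace.mk_append, hl])
  rw [runWord, List.foldl_append] at hm
  by_contra hl'
  rw [Option.not_isSome_iff_eq_none, runWord] at hl'
  rw [hl', List.foldl_fixed' fun _ => rfl] at hm
  exact Bool.false_ne_true hm

theorem exists_mixed_of_isPrime {v : Trace M.Dep} {Q : Set P} (hv : v.IsPrime)
    (hI : ¬ M.IndepProcs v Q) (hdom : ¬ M.tdom v ⊆ Q) :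
    ∃ a ∈ v.alph, (M.dom a ∩ Q).Nonempty ∧ (M.dom a ∩ Qᶜ).Nonempty := by
  by_contra! hmixed
  have hsplit : ∀ x ∈ v.alph, ∀ y ∈ v.alph,
      (M.dom x ∩ Q).Nonempty → ¬ (M.dom y ∩ Q).Nonempty → ¬ M.Dep x y := by
    rintro x hx y - hxQ hyQ ⟨p, hpx, hpy⟩
    by_cases hpQ : p ∈ Q
    exacts [hyQ ⟨p, hpy, hpQ⟩, (hmixed x hx hxQ).subset ⟨hpx, hpQ⟩]
  rcases hv.forall_or_forall _ hsplit with hQ | hQc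
  · exact hdom fun p ⟨a, ha, hp⟩ => by_contra fun hpQ =>
      (hmixed a ha (hQ a ha)).subset ⟨hp, hpQ⟩
  · exact hI fun a ha => Set.not_nonempty_iff_eq_empty.1 (hQc a ha)

open Trace in
theorem Broadcast.isPrime_mul_or {Q : Set P} {u v : Trace M.Dep} (hu : M.Broadcast Q u)
    (huv : M.IsPlay (u * v)) (hv : v.IsPrime) :
    (u * v).IsPrime ∨ M.IndepProcs v Q ∨ M.tdom v ⊆ Q := by
  by_contra! ⟨hnp, hI, hdom⟩
  obtain ⟨a, ha, haQ, haQc⟩ := M.exists_mixed_of_isPrime hv hI hdom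
  obtain ⟨b, hb : LastIs b v⟩ := hv
  obtain ⟨v₁, ⟨v₂, rfl⟩, ha₁⟩ := exists_prefix_lastIs ha
  obtain ⟨v₁', rfl⟩ := ha₁.exists_eq_mul
  have hview := isView_view {a} (u * (v₁' * Trace.mk M.Dep [a]))
  obtain ⟨x, hx⟩ := hu.2.2 _ a (by rw [← mul_assoc] at huv; exact huv.of_mul)
    ⟨u * v₁', (mul_assoc ..).symm⟩ haQ haQc
  generalize view {a} (u * (v₁' * Trace.mk M.Dep [a])) = ω at hview hx
  have hω : LastIs a ω := hview.lastIs (mul_assoc ..).symm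
  obtain ⟨⟨z, hz, -⟩, -⟩ := hview
  have hxz : x * z = v₁' * Trace.mk M.Dep [a] := mul_left_cancel (by rw [← mul_assoc, hx, hz])
  have hne : u * _ ≠ 1 := ne_one_of_mem_alph (a := b) (by rw [alph_mul]; exact .inr hb.mem_alph)
  refine hnp ⟨b, lastIs_iff.2 ⟨hne, fun s f hsf => ?_⟩⟩
  rcases mul_eq_mul_single_cases hsf with ⟨v', hv'⟩ | ⟨⟨u', rfl⟩, hvf⟩
  · exact hb.eq_of_eq_mul hv'
  have hxf : x.IndepSet {f} := hvf.mono fun c hc => by simp [← hxz, hc]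
  obtain rfl : f = a := hω.eq_of_eq_mul (s := u' * x) <| by
    rw [← hx, mul_assoc, ← mul_single_comm hxf, mul_assoc]
  exact absurd (refl f) (hvf f ha f rfl)

open Trace in
theorem broadcast_of_forall {Q : Set P} {u : Trace M.Dep} (hprime : u.IsPrime)
    (hplay : M.IsPlay u)
    (h : ∀ v, M.IsPlay (u * v) → v.IsPrime →
      (u * v).IsPrime ∨ M.IndepProcs v Q ∨ M.tdom v ⊆ Q) :
    M.Broadcast Q u := by
  refine ⟨hprime, hplay, fun v a huv ⟨t, ht⟩ haQ haQc => ?_⟩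
  have hview := isView_view {a} (u * v)
  generalize view {a} (u * v) = ω at hview ⊢
  have hω : LastIs a ω := hview.lastIs ht
  obtain ⟨⟨z, hz, hzI⟩, -⟩ := hview
  obtain ⟨p, q, r, s, rfl, rfl, rfl, rfl, hqr⟩ := levi hz.symm
  have hqa : q.IndepSet {a} := hzI.mono (by simp)
  have hcomm : p * q * r = p * r * q := by rw [mul_assoc, mul_comm_of_indepSet hqr, ← mul_assoc]
  suffices q = 1 from ⟨r, by rw [this, mul_one]⟩
  by_cases hr : r = 1
  · subst hr
    exact hω.eq_one_of_isPrime_mul hqa (by simpa using hprime)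
  · have har : LastIs a r := hω.of_mul hr
    rcases h r (by rw [← mul_assoc] at huv; exact huv.of_mul) ⟨a, har⟩ with hpr | hI | hdom
    · exact hω.eq_one_of_isPrime_mul hqa (hcomm ▸ hpr)
    · exact absurd (hI a har.mem_alph) haQ.ne_empty
    · obtain ⟨x, hx, hxQ⟩ := haQc
      exact absurd (hdom ⟨a, har.mem_alph, hx⟩) hxQ

end ZAut
end MazTrace

open MazTrace in
theorem broadcast_characterization_general {A P : Type*} (M : ZAut A P)
    (u : Trace M.Dep) (hprime : u.IsPrime) (hplay : M.IsPlay u) (Q : Set P) :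
    M.Broadcast Q u ↔
      ∀ v : Trace M.Dep, M.IsPlay (u * v) → v.IsPrime →
        ((u * v).IsPrime ∨ M.IndepProcs v Q ∨ M.tdom v ⊆ Q) :=
  ⟨fun hu _ huv hv => hu.isPrime_mul_or huv hv, ZAut.broadcast_of_forall hprime hplay⟩

open MazTrace in
/-- A prime play `u` is a `Q`-broadcast iff for every trace `v` such that `uv`
is a play and `v` is prime: `uv` is prime, or `v I Q`, or `dom(v) ⊆ Q`. -/
theorem broadcast_characterization {A P : Type*} [Finite A] [Finite P] (M : ZAut A P)
    (u : Trace M.Dep) (hprime : u.IsPrime) (hplay : M.IsPlay u) (Q : Set P) :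
    M.Broadcast Q u ↔
      ∀ v : Trace M.Dep, M.IsPlay (u * v) → v.IsPrime →
        ((u * v).IsPrime ∨ M.IndepProcs v Q ∨ M.tdom v ⊆ Q) :=
  broadcast_characterization_general M u hprime hplay Q
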